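/- arXiv:1512.05966 — 3 statements merged into one kernel-verified Lean document; each statement's English description precedes it below -/
import Mathlib

section
/- (Lusin–Menchoff lemma for the Cantor space) Let F be a closed subset of 2^ω and M ⊇ F a λ-measurable subset of 2^ω such that M has density 1 at every point of F. Then there is a closed set C ⊆ 2^ω such that (1) F ⊆ C ⊆ M, (2) M has density 1 at every point of C, and (3) C has density 1 at every point of F. -/
/-!
The open set `Fᶜ` is the disjoint union of the cylinders `N_s` that are minimal among those
avoiding `F`. By Lebesgue's density theorem (proved by a Vitali argument with minimal cylinders)
almost every point of `M` is a density point of `M`, so inside each such `N_s` there is a closed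
set of density points of `M`, contained in `M`, that misses only a `2^{-|s|}`-fraction of
`N_s` in measure. Together with `F` these pieces form `C`, which is closed because a point outside
`F` has a neighbourhood `N_s` meeting only one piece. A cylinder `N_{β↾l}` with `β ∈ F` meets only
pieces with `β↾l ⊆ s`, which are disjoint subsets of `N_{β↾l}`, so there `C` misses at most a
`2^{-l}`-fraction of `N_{β↾l}` from `M`.
-/

open MeasureTheory Filter Topology
open scoped ENNReal

/-- The basic cylinder `N_s` determined by a finite binary sequence `s`:
the set of all `β ∈ 2^ω` extending `s`. -/
def cyl (s : List Bool) : Set (ℕ → Bool) :=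
  {β | ∀ i : Fin s.length, β i = s.get i}

/-- The initial segment `β↾l` of `β ∈ 2^ω`, as a finite binary sequence. -/
def seg (β : ℕ → Bool) (l : ℕ) : List Bool := List.ofFn (fun i : Fin l => β i)

/-- A martingale: a `[0,1]`-valued function on finite binary sequences with
`f(s) = (f(s⌢0) + f(s⌢1))/2`. -/
def IsMartingale (f : List Bool → ℝ) : Prop :=
  (∀ s, f s ∈ Set.Icc (0:ℝ) 1) ∧
  ∀ s, f s = (f (s ++ [false]) + f (s ++ [true])) / 2

/-- The oscillation `osc(f,β) = inf_N sup_{p,q ≥ N} |f(β↾p) − f(β↾q)|`. -/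
noncomputable def osc (f : List Bool → ℝ) (β : ℕ → Bool) : ℝ :=
  ⨅ N : ℕ, ⨆ p : {n : ℕ // N ≤ n}, ⨆ q : {n : ℕ // N ≤ n},
    |f (seg β p.1) - f (seg β q.1)|

/-- The set of divergence `D(f) = {β : osc(f,β) > 0}`. -/
def divSet (f : List Bool → ℝ) : Set (ℕ → Bool) := {β | 0 < osc f β}

/-- `M` has density 1 at `β`: `λ(M ∩ N_{β↾l}) / λ(N_{β↾l}) → 1`. -/
def densityOne (μ : Measure (ℕ → Bool)) (M : Set (ℕ → Bool)) (β : ℕ → Bool) : Prop :=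
  Tendsto (fun l : ℕ => μ (M ∩ cyl (seg β l)) / μ (cyl (seg β l))) atTop (𝓝 1)

/-- A set is `Σ⁰₃` iff it is a countable union of `Gδ` sets. -/
def IsSigma03 {X : Type*} [TopologicalSpace X] (S : Set X) : Prop :=
  ∃ g : ℕ → Set X, (∀ n, IsGδ (g n)) ∧ S = ⋃ n, g n

/-- A set is coanalytic (`Π¹₁`) iff its complement is analytic. -/
def IsCoanalytic {X : Type*} [TopologicalSpace X] (S : Set X) : Prop :=
  MeasureTheory.AnalyticSet Sᶜ

/-- The associated (partial) function of a martingale: `ψ(f)(β) = lim_l f(β↾l)`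
(a junk value if the limit does not exist). -/
noncomputable def psi (f : List Bool → ℝ) (β : ℕ → Bool) : ℝ :=
  limUnder atTop (fun l => f (seg β l))

open Set

lemma isClosed_union_biUnion_of_pairwiseDisjoint {X ι : Type*} [TopologicalSpace X]
    {F : Set X} {S : Set ι} {U K : ι → Set X} (hU : ∀ i ∈ S, IsOpen (U i))
    (hS : S.PairwiseDisjoint U) (hFU : Fᶜ = ⋃ i ∈ S, U i) (hK : ∀ i ∈ S, IsClosed (K i))
    (hKU : ∀ i ∈ S, K i ⊆ U i) : IsClosed (F ∪ ⋃ i ∈ S, K i) := by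
  have hcompl : (F ∪ ⋃ i ∈ S, K i)ᶜ = ⋃ i ∈ S, U i \ K i := by
    ext x
    simp only [mem_compl_iff, mem_union, mem_iUnion₂, Set.mem_sdiff, not_or, not_exists]
    constructor
    · rintro ⟨hxF, hxK⟩
      rw [← mem_compl_iff, hFU] at hxF
      obtain ⟨i, hi, hxi⟩ := mem_iUnion₂.1 hxF
      exact ⟨i, hi, hxi, hxK i hi⟩
    · rintro ⟨i, hi, hxi, hxK⟩
      have hxF : x ∈ Fᶜ := hFU ▸ mem_iUnion₂.2 ⟨i, hi, hxi⟩
      exact ⟨hxF, fun j hj hxj => hxK (hS.elim_set hj hi x (hKU j hj hxj) hxi ▸ hxj)⟩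
  rw [← isOpen_compl_iff, hcompl]
  exact isOpen_biUnion fun i hi => (hU i hi).sdiff (hK i hi)

lemma mem_cyl {x : ℕ → Bool} {s : List Bool} :
    x ∈ cyl s ↔ ∀ i (h : i < s.length), x i = s[i] :=
  ⟨fun hx i h => hx ⟨i, h⟩, fun hx i => hx i i.2⟩

@[simp] lemma length_seg (β : ℕ → Bool) (l : ℕ) : (seg β l).length = l := by
  simp [seg]

@[simp] lemma getElem_seg (β : ℕ → Bool) (l i : ℕ) (h : i < (seg β l).length) :
    (seg β l)[i] = β i := by
  simp [seg]

lemma mem_cyl_seg (β : ℕ → Bool) (l : ℕ) : β ∈ cyl (seg β l) :=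
  mem_cyl.2 fun i h => (getElem_seg β l i h).symm

lemma isOpen_cyl (s : List Bool) : IsOpen (cyl s) := by
  have : cyl s = ⋂ i : Fin s.length, (fun β : ℕ → Bool => β i) ⁻¹' {s.get i} := by
    ext; simp [cyl]
  rw [this]
  exact isOpen_iInter_of_finite fun i => (isOpen_discrete _).preimage (continuous_apply _)

lemma measurableSet_cyl (s : List Bool) : MeasurableSet (cyl s) :=
  (isOpen_cyl s).measurableSet

lemma cyl_subset_cyl {s t : List Bool} (h : s <+: t) : cyl t ⊆ cyl s := fun x hx =>
  mem_cyl.2 fun i hi => by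
    rw [h.getElem hi]
    exact mem_cyl.1 hx i (hi.trans_le h.length_le)

lemma prefix_of_mem_cyl {x : ℕ → Bool} {s t : List Bool} (hs : x ∈ cyl s) (ht : x ∈ cyl t)
    (hl : s.length ≤ t.length) : s <+: t := by
  rw [List.prefix_iff_eq_take]
  refine List.ext_getElem (by simp [hl]) fun i h₁ _ => ?_
  rw [List.getElem_take, ← mem_cyl.1 hs i h₁, mem_cyl.1 ht i (h₁.trans_le hl)]

lemma seg_length_eq_of_mem_cyl {x : ℕ → Bool} {s : List Bool} (hx : x ∈ cyl s) :
    seg x s.length = s :=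
  ((prefix_of_mem_cyl hx (mem_cyl_seg x s.length) (by simp)).eq_of_length (by simp)).symm

lemma eventually_cyl_seg_subset {U : Set (ℕ → Bool)} (hU : IsOpen U) {β : ℕ → Bool}
    (hβ : β ∈ U) : ∀ᶠ l in atTop, cyl (seg β l) ⊆ U := by
  obtain ⟨I, u, hu, hIU⟩ := isOpen_pi_iff.1 hU β hβ
  refine eventually_atTop.2 ⟨I.sup id + 1, fun l hl x hx => hIU fun i hi => ?_⟩
  have hil : i < (seg β l).length := by
    simpa using (Nat.lt_succ_of_le (I.le_sup (f := id) hi)).trans_le hl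
  rw [mem_cyl.1 hx i hil, getElem_seg]
  exact (hu i hi).2

section PrefixMinimals

def prefixMinimals (𝒮 : Set (List Bool)) : Set (List Bool) :=
  {s | s ∈ 𝒮 ∧ ∀ t ∈ 𝒮, t <+: s → t = s}

variable {𝒮 : Set (List Bool)}

lemma pairwiseDisjoint_prefixMinimals : (prefixMinimals 𝒮).PairwiseDisjoint cyl := by
  intro s hs t ht hst
  refine Set.disjoint_left.2 fun x hxs hxt => ?_
  rcases le_total s.length t.length with h | h
  · exact hst (ht.2 s hs.1 (prefix_of_mem_cyl hxs hxt h))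
  · exact hst (hs.2 t ht.1 (prefix_of_mem_cyl hxt hxs h)).symm

lemma exists_mem_prefixMinimals_of_seg_mem {β : ℕ → Bool} {l : ℕ} (h : seg β l ∈ 𝒮) :
    ∃ s ∈ prefixMinimals 𝒮, β ∈ cyl s := by
  classical
  have hex : ∃ n, seg β n ∈ 𝒮 := ⟨l, h⟩
  refine ⟨seg β (Nat.find hex), ⟨Nat.find_spec hex, fun t ht hpre => ?_⟩, mem_cyl_seg β _⟩
  have hβt : seg β t.length = t :=
    seg_length_eq_of_mem_cyl (cyl_subset_cyl hpre (mem_cyl_seg β _))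
  have hlen : t.length = Nat.find hex :=
    le_antisymm (by simpa using hpre.length_le) (Nat.find_min' hex (by rwa [hβt]))
  rw [← hβt, hlen]

lemma compl_eq_biUnion_prefixMinimals {F : Set (ℕ → Bool)} (hF : IsClosed F) :
    Fᶜ = ⋃ s ∈ prefixMinimals {s | Disjoint (cyl s) F}, cyl s := by
  refine Subset.antisymm (fun x hx => ?_) (iUnion₂_subset fun s hs => ?_)
  · obtain ⟨l, hl⟩ := (eventually_cyl_seg_subset hF.isOpen_compl hx).exists
    obtain ⟨s, hs, hxs⟩ :=
      exists_mem_prefixMinimals_of_seg_mem (show seg x l ∈ {s | Disjoint (cyl s) F} from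
        subset_compl_iff_disjoint_right.1 hl)
    exact mem_biUnion hs hxs
  · exact subset_compl_iff_disjoint_right.2 hs.1

end PrefixMinimals

section Density

variable {μ : Measure (ℕ → Bool)}

lemma densityOne_congr_ae {A B : Set (ℕ → Bool)} (h : A =ᵐ[μ] B) :
    densityOne μ A = densityOne μ B := by
  ext β
  simp only [densityOne, measure_congr (h.inter (ae_eq_refl (cyl (seg β _))))]

lemma measure_inter_cyl_div_le_one (A : Set (ℕ → Bool)) (s : List Bool) :
    μ (A ∩ cyl s) / μ (cyl s) ≤ 1 :=
  ENNReal.div_le_of_le_mul (by rw [one_mul]; exact measure_mono inter_subset_right)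

lemma measurable_measure_inter_cyl_seg_div (A : Set (ℕ → Bool)) (l : ℕ) :
    Measurable fun β => μ (A ∩ cyl (seg β l)) / μ (cyl (seg β l)) := by
  have hfac : (fun β => μ (A ∩ cyl (seg β l)) / μ (cyl (seg β l))) =
      (fun v : Fin l → Bool => μ (A ∩ cyl (List.ofFn v)) / μ (cyl (List.ofFn v))) ∘
        fun β i => β i := rfl
  rw [hfac]
  exact (measurable_of_countable _).comp
    (measurable_pi_lambda _ fun i => measurable_pi_apply _)

lemma measurableSet_densityOne (A : Set (ℕ → Bool)) :
    MeasurableSet {β | densityOne μ A β} :=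
  measurableSet_tendsto _ fun l => measurable_measure_inter_cyl_seg_div A l

/-- Vitali covering argument: the prefix-minimal cylinders inside `U` on which `A` has relative
measure at most `a` are disjoint and cover `E`. -/
lemma measure_le_mul_of_frequently_le_mul {A E U : Set (ℕ → Bool)} {a : ℝ≥0∞}
    (hEA : E ⊆ A)
    (hE : ∀ β ∈ E, ∃ᶠ l in atTop, μ (A ∩ cyl (seg β l)) ≤ a * μ (cyl (seg β l)))
    (hU : IsOpen U) (hEU : E ⊆ U) :
    μ E ≤ a * μ U := by
  set 𝒮 := {s | cyl s ⊆ U ∧ μ (A ∩ cyl s) ≤ a * μ (cyl s)}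
  set T := prefixMinimals 𝒮
  have hcover : E ⊆ ⋃ s ∈ T, A ∩ cyl s := fun β hβ => by
    obtain ⟨l, hla, hlU⟩ :=
      ((hE β hβ).and_eventually (eventually_cyl_seg_subset hU (hEU hβ))).exists
    obtain ⟨s, hs, hβs⟩ :=
      exists_mem_prefixMinimals_of_seg_mem (show seg β l ∈ 𝒮 from ⟨hlU, hla⟩)
    exact mem_biUnion hs ⟨hEA hβ, hβs⟩
  calc μ E ≤ ∑' s : T, μ (A ∩ cyl s) :=
        (measure_mono hcover).trans (measure_biUnion_le _ T.to_countable _)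
    _ ≤ ∑' s : T, a * μ (cyl s) := ENNReal.tsum_le_tsum fun s => s.2.1.2
    _ = a * μ (⋃ s ∈ T, cyl s) := by
      rw [ENNReal.tsum_mul_left, measure_biUnion T.to_countable pairwiseDisjoint_prefixMinimals
        fun s _ => measurableSet_cyl s]
    _ ≤ a * μ U := by gcongr; exact iUnion₂_subset fun s hs => hs.1.1

variable [IsFiniteMeasure μ]

lemma measure_frequently_le_mul_eq_zero (A : Set (ℕ → Bool)) {a : ℝ≥0∞} (ha : a < 1) :
    μ {β | β ∈ A ∧ ∃ᶠ l in atTop, μ (A ∩ cyl (seg β l)) ≤ a * μ (cyl (seg β l))} = 0 := by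
  set E := {β | β ∈ A ∧ ∃ᶠ l in atTop, μ (A ∩ cyl (seg β l)) ≤ a * μ (cyl (seg β l))}
  have hE : μ E ≤ a * μ E := ENNReal.le_of_forall_pos_le_add fun ε hε _ => by
    obtain ⟨U, hEU, hU, hUE⟩ := E.exists_isOpen_lt_add (measure_ne_top μ E)
      (ENNReal.coe_ne_zero.2 hε.ne')
    calc μ E ≤ a * μ U :=
          measure_le_mul_of_frequently_le_mul (fun _ h => h.1) (fun _ h => h.2) hU hEU
      _ ≤ a * μ E + a * ε := by rw [← mul_add]; gcongr
      _ ≤ a * μ E + ε := by gcongr; exact mul_le_of_le_one_left' ha.le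
  by_contra hE0
  exact (ENNReal.mul_lt_mul_left hE0 (measure_ne_top μ E) ha).not_ge (by rwa [one_mul])

lemma ae_densityOne (hcyl : ∀ s, μ (cyl s) ≠ 0) (A : Set (ℕ → Bool)) :
    ∀ᵐ β ∂μ, β ∈ A → densityOne μ A β := by
  have ha : Tendsto (fun k : ℕ => 1 - (2⁻¹ : ℝ≥0∞) ^ k) atTop (𝓝 1) := by
    simpa using ENNReal.Tendsto.sub tendsto_const_nhds
      (ENNReal.tendsto_pow_atTop_nhds_zero_of_lt_one (by norm_num)) (Or.inl ENNReal.one_ne_top)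
  have ha_lt (k : ℕ) : 1 - (2⁻¹ : ℝ≥0∞) ^ k < 1 :=
    ENNReal.sub_lt_self ENNReal.one_ne_top one_ne_zero (pow_ne_zero k (by norm_num))
  have hbad (k : ℕ) :=
    measure_eq_zero_iff_ae_notMem.1 (measure_frequently_le_mul_eq_zero (μ := μ) A (ha_lt k))
  filter_upwards [ae_all_iff.2 hbad] with β hβ hβA
  refine tendsto_order.2 ⟨fun b hb => ?_, fun b hb => Eventually.of_forall fun l =>
    (measure_inter_cyl_div_le_one A _).trans_lt hb⟩
  obtain ⟨k, hk⟩ := (ha.eventually (eventually_gt_nhds hb)).exists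
  filter_upwards [not_frequently.1 fun h => hβ k ⟨hβA, h⟩] with l hl
  rw [ENNReal.lt_div_iff_mul_lt (Or.inl (hcyl _)) (Or.inl (measure_ne_top μ _))]
  exact (mul_le_mul_left hk.le _).trans_lt (not_le.1 hl)

end Density

section LusinMenchoff

variable {μ : Measure (ℕ → Bool)}

/-- A cylinder `cyl (seg β l)` around a point of `F` meets only those `cyl s` with
`seg β l <+: s`, and these are disjoint subsets of it. -/
lemma measure_cyl_seg_inter_biUnion_le {F : Set (ℕ → Bool)} {S : Set (List Bool)}
    (hS : S.PairwiseDisjoint cyl) (hSF : ∀ s ∈ S, Disjoint (cyl s) F)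
    {E : List Bool → Set (ℕ → Bool)} (hE : ∀ s ∈ S, E s ⊆ cyl s)
    (hμE : ∀ s ∈ S, μ (E s) ≤ 2⁻¹ ^ s.length * μ (cyl s)) {β : ℕ → Bool} (hβ : β ∈ F)
    (l : ℕ) : μ (cyl (seg β l) ∩ ⋃ s ∈ S, E s) ≤ 2⁻¹ ^ l * μ (cyl (seg β l)) := by
  set S' := {s | s ∈ S ∧ seg β l <+: s}
  have hsub : cyl (seg β l) ∩ ⋃ s ∈ S, E s ⊆ ⋃ s ∈ S', E s := by
    rintro x ⟨hxl, hxE⟩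
    obtain ⟨s, hs, hxs⟩ := mem_iUnion₂.1 hxE
    refine mem_biUnion ⟨hs, ?_⟩ hxs
    rcases le_total s.length l with h | h
    · have hβs := cyl_subset_cyl (prefix_of_mem_cyl (hE s hs hxs) hxl (by simpa using h))
        (mem_cyl_seg β l)
      exact absurd hβ ((hSF s hs).notMem_of_mem_left hβs)
    · exact prefix_of_mem_cyl hxl (hE s hs hxs) (by simpa using h)
  calc μ (cyl (seg β l) ∩ ⋃ s ∈ S, E s)
      ≤ ∑' s : S', μ (E s) :=
        (measure_mono hsub).trans (measure_biUnion_le _ S'.to_countable _)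
    _ ≤ ∑' s : S', 2⁻¹ ^ l * μ (cyl s) := ENNReal.tsum_le_tsum fun s => by
      refine (hμE s s.2.1).trans (mul_le_mul_left ?_ _)
      exact pow_le_pow_right_of_le_one' (by norm_num) (by simpa using s.2.2.length_le)
    _ = 2⁻¹ ^ l * μ (⋃ s ∈ S', cyl s) := by
      rw [ENNReal.tsum_mul_left, measure_biUnion S'.to_countable (hS.subset fun s hs => hs.1)
        fun s _ => measurableSet_cyl s]
    _ ≤ 2⁻¹ ^ l * μ (cyl (seg β l)) := by
      gcongr
      exact iUnion₂_subset fun s hs => cyl_subset_cyl hs.2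

variable [IsFiniteMeasure μ]

/-- `C` is `F` together with, in each prefix-minimal cylinder avoiding `F`, a closed subset of `G`
missing little of `G` relative to the cylinder. -/
lemma exists_isClosed_measure_inter_cyl_seg_le (hcyl : ∀ s, μ (cyl s) ≠ 0)
    {F G : Set (ℕ → Bool)} (hF : IsClosed F) (hG : MeasurableSet G) :
    ∃ C, IsClosed C ∧ F ⊆ C ∧ C ⊆ F ∪ G ∧ ∀ β ∈ F, ∀ l,
      μ (G ∩ cyl (seg β l)) ≤ μ (C ∩ cyl (seg β l)) + 2⁻¹ ^ l * μ (cyl (seg β l)) := by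
  set S := prefixMinimals {s | Disjoint (cyl s) F}
  have hK (s : List Bool) : ∃ K ⊆ G ∩ cyl s, IsClosed K ∧
      μ ((G ∩ cyl s) \ K) < 2⁻¹ ^ s.length * μ (cyl s) :=
    (hG.inter (measurableSet_cyl s)).exists_isClosed_sdiff_lt (measure_ne_top μ _)
      (mul_ne_zero (pow_ne_zero _ (by norm_num)) (hcyl s))
  choose K hKG hKc hKμ using hK
  refine ⟨F ∪ ⋃ s ∈ S, K s, ?_, subset_union_left,
    union_subset_union_right F (iUnion₂_subset fun s _ => (hKG s).trans inter_subset_left),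
    fun β hβ l => ?_⟩
  · exact isClosed_union_biUnion_of_pairwiseDisjoint (fun s _ => isOpen_cyl s)
      pairwiseDisjoint_prefixMinimals (compl_eq_biUnion_prefixMinimals hF) (fun s _ => hKc s)
      fun s _ => (hKG s).trans inter_subset_right
  have hsub : G ∩ cyl (seg β l) ⊆ ((F ∪ ⋃ s ∈ S, K s) ∩ cyl (seg β l)) ∪
      (cyl (seg β l) ∩ ⋃ s ∈ S, (G ∩ cyl s) \ K s) := by
    rintro x ⟨hxG, hxl⟩
    by_cases hxC : x ∈ F ∪ ⋃ s ∈ S, K s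
    · exact Or.inl ⟨hxC, hxl⟩
    have hxF : x ∈ Fᶜ := fun h => hxC (Or.inl h)
    rw [compl_eq_biUnion_prefixMinimals hF] at hxF
    obtain ⟨s, hs, hxs⟩ := mem_iUnion₂.1 hxF
    exact Or.inr ⟨hxl, mem_biUnion hs ⟨⟨hxG, hxs⟩, fun h => hxC (Or.inr (mem_biUnion hs h))⟩⟩
  refine (measure_mono hsub).trans ((measure_union_le _ _).trans ?_)
  gcongr
  exact measure_cyl_seg_inter_biUnion_le pairwiseDisjoint_prefixMinimals (fun s hs => hs.1)
    (fun s _ => sdiff_subset.trans inter_subset_right) (fun s _ => (hKμ s).le) hβ l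

lemma densityOne_of_measure_inter_cyl_seg_le (hcyl : ∀ s, μ (cyl s) ≠ 0)
    {A B : Set (ℕ → Bool)} {β : ℕ → Bool} (hA : densityOne μ A β)
    (h : ∀ l, μ (A ∩ cyl (seg β l)) ≤ μ (B ∩ cyl (seg β l)) + 2⁻¹ ^ l * μ (cyl (seg β l))) :
    densityOne μ B β := by
  have hlow (l : ℕ) : μ (A ∩ cyl (seg β l)) / μ (cyl (seg β l)) - 2⁻¹ ^ l ≤
      μ (B ∩ cyl (seg β l)) / μ (cyl (seg β l)) := by
    rw [tsub_le_iff_right]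
    calc μ (A ∩ cyl (seg β l)) / μ (cyl (seg β l))
        ≤ (μ (B ∩ cyl (seg β l)) + 2⁻¹ ^ l * μ (cyl (seg β l))) / μ (cyl (seg β l)) :=
          ENNReal.div_le_div_right (h l) _
      _ = μ (B ∩ cyl (seg β l)) / μ (cyl (seg β l)) + 2⁻¹ ^ l := by
          rw [ENNReal.add_div, ENNReal.mul_div_cancel_right (hcyl _) (measure_ne_top μ _)]
  have hA' : Tendsto (fun l => μ (A ∩ cyl (seg β l)) / μ (cyl (seg β l)) - 2⁻¹ ^ l)
      atTop (𝓝 1) := by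
    simpa using ENNReal.Tendsto.sub hA
      (ENNReal.tendsto_pow_atTop_nhds_zero_of_lt_one (by norm_num)) (Or.inl ENNReal.one_ne_top)
  exact tendsto_of_tendsto_of_tendsto_of_le_of_le hA' tendsto_const_nhds hlow
    fun l => measure_inter_cyl_div_le_one B _

end LusinMenchoff

/-- Lusin–Menchoff: for `F` closed, `M ⊇ F` λ-measurable with
density 1 at every point of `F`, there is a closed `C` with `F ⊆ C ⊆ M`,
`M` of density 1 at every point of `C`, and `C` of density 1 at every point of `F`. -/
theorem lusin_menchoff
    (μ : Measure (ℕ → Bool))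
    (hμ : ∀ s : List Bool, μ (cyl s) = (1/2 : ℝ≥0∞) ^ s.length)
    (F M : Set (ℕ → Bool)) (hF : IsClosed F) (hM : NullMeasurableSet M μ)
    (hFM : F ⊆ M) (hd : ∀ β ∈ F, densityOne μ M β) :
    ∃ C : Set (ℕ → Bool), IsClosed C ∧ F ⊆ C ∧ C ⊆ M ∧
      (∀ β ∈ C, densityOne μ M β) ∧ (∀ β ∈ F, densityOne μ C β) := by
  have : IsProbabilityMeasure μ := ⟨by simpa [cyl] using hμ []⟩
  have hcyl (s : List Bool) : μ (cyl s) ≠ 0 := by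
    rw [hμ]
    exact pow_ne_zero _ (by norm_num)
  obtain ⟨M₀, hM₀M, hM₀, hM₀ae⟩ := hM.exists_measurable_subset_ae_eq
  set G := M₀ ∩ {β | densityOne μ M β}
  have hGM : G =ᵐ[μ] M := by
    refine eventuallyEq_set.2 ?_
    filter_upwards [eventuallyEq_set.1 hM₀ae, ae_densityOne hcyl M] with x hx hxd
    exact ⟨fun h => hM₀M h.1, fun h => ⟨hx.2 h, hxd h⟩⟩
  obtain ⟨C, hC, hFC, hCFG, hCdens⟩ :=
    exists_isClosed_measure_inter_cyl_seg_le hcyl hF (hM₀.inter (measurableSet_densityOne M))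
  refine ⟨C, hC, hFC, hCFG.trans (union_subset hFM fun x hx => hM₀M hx.1), fun β hβ => ?_,
    fun β hβ => ?_⟩
  · rcases hCFG hβ with hβF | hβG
    exacts [hd β hβF, hβG.2]
  · refine densityOne_of_measure_inter_cyl_seg_le hcyl ?_ (hCdens β hβ)
    rw [densityOne_congr_ae hGM]
    exact hd β hβ
end

section
/- Let (f_n)_{n∈ℕ} be a sequence of martingales such that osc(f_n,β) ∈ {0} ∪ [1/2, 1] for every n ∈ ℕ and every β ∈ 2^ω. Then there exists a martingale f with D(f) = ⋃_{n∈ℕ} D(f_n). -/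
open MeasureTheory Filter Topology
open scoped ENNReal

/-!
Give the `n`-th martingale the weight `4⁻ⁿ⁻¹` and sum: `g = ∑ₙ 4⁻ⁿ⁻¹ fₙ` is again a martingale.
Along `β`, `osc(f,β) = 0` exactly when `f(β↾l)` is Cauchy. If every `fₙ(β↾l)` converges, so does
`g(β↾l)` by dominated convergence. Otherwise let `n` be the first index with `osc(fₙ,β) > 0`,
hence `≥ 1/2`. The terms before `n` converge, and the terms after `n` have total weight
`4⁻ⁿ⁻¹/3`, so they oscillate by at most a third of the weight of `fₙ`; if `g(β↾l)` converged,
`osc(fₙ,β)` would be at most `1/3`.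
-/

open Set

noncomputable def tailOsc (u : ℕ → ℝ) (N : ℕ) : ℝ :=
  ⨆ p : {n : ℕ // N ≤ n}, ⨆ q : {n : ℕ // N ≤ n}, |u p.1 - u q.1|

noncomputable def seqOsc (u : ℕ → ℝ) : ℝ := ⨅ N, tailOsc u N

theorem osc_eq_seqOsc (f : List Bool → ℝ) (β : ℕ → Bool) :
    osc f β = seqOsc (fun l => f (seg β l)) := rfl

instance (N : ℕ) : Nonempty {n : ℕ // N ≤ n} := ⟨⟨N, le_rfl⟩⟩

section Oscillation

variable {u : ℕ → ℝ} {C c : ℝ}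

theorem tailOsc_le {N : ℕ} (h : ∀ p q, N ≤ p → N ≤ q → |u p - u q| ≤ c) :
    tailOsc u N ≤ c :=
  ciSup_le fun p => ciSup_le fun q => h p q p.2 q.2

theorem abs_sub_le_tailOsc (hu : ∀ p q, |u p - u q| ≤ C) {N p q : ℕ} (hp : N ≤ p)
    (hq : N ≤ q) : |u p - u q| ≤ tailOsc u N := by
  have hinner : ∀ p' : {n : ℕ // N ≤ n},
      BddAbove (range fun q' : {n : ℕ // N ≤ n} => |u p'.1 - u q'.1|) :=
    fun p' => ⟨C, by rintro x ⟨q', rfl⟩; exact hu _ _⟩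
  have houter : BddAbove (range fun p' : {n : ℕ // N ≤ n} =>
      ⨆ q' : {n : ℕ // N ≤ n}, |u p'.1 - u q'.1|) :=
    ⟨C, by rintro x ⟨p', rfl⟩; exact ciSup_le fun q' => hu _ _⟩
  exact le_ciSup_of_le houter ⟨p, hp⟩ (le_ciSup (hinner ⟨p, hp⟩) ⟨q, hq⟩)

theorem tailOsc_nonneg (hu : ∀ p q, |u p - u q| ≤ C) (N : ℕ) : 0 ≤ tailOsc u N := by
  simpa using abs_sub_le_tailOsc hu le_rfl le_rfl

theorem seqOsc_nonneg (hu : ∀ p q, |u p - u q| ≤ C) : 0 ≤ seqOsc u :=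
  le_ciInf (tailOsc_nonneg hu)

theorem seqOsc_le_tailOsc (hu : ∀ p q, |u p - u q| ≤ C) (N : ℕ) : seqOsc u ≤ tailOsc u N :=
  ciInf_le ⟨0, by rintro x ⟨N', rfl⟩; exact tailOsc_nonneg hu N'⟩ N

theorem seqOsc_eq_zero_iff (hu : ∀ p q, |u p - u q| ≤ C) : seqOsc u = 0 ↔ CauchySeq u := by
  rw [Metric.cauchySeq_iff]
  constructor
  · intro h ε hε
    obtain ⟨N, hN⟩ := exists_lt_of_ciInf_lt (h.trans_lt hε)
    exact ⟨N, fun p hp q hq => (abs_sub_le_tailOsc hu hp hq).trans_lt hN⟩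
  · intro h
    refine le_antisymm (le_of_forall_pos_le_add fun ε hε => ?_) (seqOsc_nonneg hu)
    obtain ⟨N, hN⟩ := h ε hε
    rw [zero_add]
    exact (seqOsc_le_tailOsc hu N).trans (tailOsc_le fun p q hp hq => (hN p hp q hq).le)

theorem seqOsc_le_add {v : ℕ → ℝ} (hv : ∀ p q, |v p - v q| ≤ C)
    (h : ∀ p q, |u p - u q| ≤ |v p - v q| + c) : seqOsc u ≤ seqOsc v + c := by
  have hu : ∀ p q, |u p - u q| ≤ C + c := fun p q => (h p q).trans (by linarith [hv p q])
  have hN : ∀ N, seqOsc u - c ≤ tailOsc v N := fun N => by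
    have : tailOsc u N ≤ tailOsc v N + c := tailOsc_le fun p q hp hq =>
      (h p q).trans (by linarith [abs_sub_le_tailOsc hv hp hq])
    linarith [seqOsc_le_tailOsc hu N]
  linarith [show seqOsc u - c ≤ seqOsc v from le_ciInf hN]

theorem seqOsc_le_of_tendsto_add {a b : ℕ → ℝ} {x : ℝ} (ha : Tendsto a atTop (𝓝 x))
    (hb : ∀ p q, |b p - b q| ≤ c) : seqOsc (a + b) ≤ c := by
  obtain ⟨R, -, hR⟩ := cauchySeq_bdd ha.cauchySeq
  have haR : ∀ p q, |a p - a q| ≤ R := fun p q => (hR p q).le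
  have hab : ∀ p q, |(a + b) p - (a + b) q| ≤ |a p - a q| + c := fun p q => by
    rw [Pi.add_apply, Pi.add_apply, add_sub_add_comm]
    exact (abs_add_le _ _).trans (by linarith [hb p q])
  simpa [(seqOsc_eq_zero_iff haR).2 ha.cauchySeq] using seqOsc_le_add haR hab

end Oscillation

theorem mem_divSet_iff {f : List Bool → ℝ} (hf : ∀ s, f s ∈ Icc 0 1) {β : ℕ → Bool} :
    β ∈ divSet f ↔ ¬CauchySeq (fun l => f (seg β l)) := by
  have hu : ∀ p q, |f (seg β p) - f (seg β q)| ≤ 1 := fun p q =>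
    abs_sub_le_of_nonneg_of_le (hf _).1 (hf _).2 (hf _).1 (hf _).2
  rw [divSet, mem_ofPred_eq, osc_eq_seqOsc, ← seqOsc_eq_zero_iff hu,
    (seqOsc_nonneg hu).lt_iff_ne', ne_eq]

section WeightedSum

variable {w : ℕ → ℝ}

theorem summable_mul_of_mem_Icc (hw0 : ∀ n, 0 ≤ w n) (hw : Summable w) {x : ℕ → ℝ}
    (hx : ∀ n, x n ∈ Icc 0 1) : Summable (fun n => w n * x n) :=
  hw.of_nonneg_of_le (fun n => mul_nonneg (hw0 n) (hx n).1)
    (fun n => mul_le_of_le_one_right (hw0 n) (hx n).2)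

theorem tsum_mul_mem_Icc (hw0 : ∀ n, 0 ≤ w n) (hw : Summable w) {x : ℕ → ℝ}
    (hx : ∀ n, x n ∈ Icc 0 1) : ∑' n, w n * x n ∈ Icc 0 (∑' n, w n) :=
  ⟨tsum_nonneg fun n => mul_nonneg (hw0 n) (hx n).1,
    (summable_mul_of_mem_Icc hw0 hw hx).tsum_le_tsum
      (fun n => mul_le_of_le_one_right (hw0 n) (hx n).2) hw⟩

theorem isMartingale_tsum_mul {f : ℕ → List Bool → ℝ} (hf : ∀ n, IsMartingale (f n))
    (hw0 : ∀ n, 0 ≤ w n) (hw : Summable w) (hw1 : ∑' n, w n ≤ 1) :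
    IsMartingale (fun s => ∑' n, w n * f n s) := by
  have hsum : ∀ s, Summable (fun n => w n * f n s / 2) := fun s =>
    (summable_mul_of_mem_Icc hw0 hw fun n => (hf n).1 s).div_const 2
  refine ⟨fun s => ?_, fun s => ?_⟩
  · have := tsum_mul_mem_Icc hw0 hw fun n => (hf n).1 s
    exact ⟨this.1, this.2.trans hw1⟩
  · calc ∑' n, w n * f n s
        = ∑' n, (w n * f n (s ++ [false]) / 2 + w n * f n (s ++ [true]) / 2) :=
          tsum_congr fun n => by rw [(hf n).2 s]; ring
      _ = _ := by rw [(hsum _).tsum_add (hsum _), tsum_div_const, tsum_div_const]; ring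

theorem cauchySeq_tsum_mul_of_forall_cauchySeq (hw : Summable w) {v : ℕ → ℕ → ℝ}
    (hv : ∀ n l, v n l ∈ Icc 0 1) (hcauchy : ∀ n, CauchySeq (v n)) :
    CauchySeq (fun l => ∑' n, w n * v n l) := by
  refine (tendsto_tsum_of_dominated_convergence (bound := fun n => |w n|) hw.abs
    (fun n => (hcauchy n).tendsto_limUnder.const_mul (w n)) (Eventually.of_forall fun l n => ?_)).cauchySeq
  rw [Real.norm_eq_abs, abs_mul]
  exact mul_le_of_le_one_right (abs_nonneg _) (abs_le.2 ⟨by linarith [(hv n l).1], (hv n l).2⟩)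

end WeightedSum

theorem summable_quarter_pow_succ : Summable (fun n : ℕ => (1/4 : ℝ) ^ (n + 1)) :=
  (summable_geometric_of_lt_one (by norm_num) (by norm_num)).mul_right _ |>.congr
    fun n => (pow_succ _ n).symm

theorem tsum_quarter_pow_tail (k : ℕ) : ∑' m, (1/4 : ℝ) ^ (m + k + 1) = (1/4) ^ k / 3 := by
  simp_rw [add_assoc, pow_add]
  rw [tsum_mul_right, tsum_geometric_of_lt_one (by norm_num) (by norm_num)]
  ring

theorem seqOsc_le_third_of_cauchySeq_tsum {v : ℕ → ℕ → ℝ} (hv : ∀ n l, v n l ∈ Icc 0 1)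
    {n : ℕ} (hprev : ∀ m < n, CauchySeq (v m))
    (hG : CauchySeq (fun l => ∑' m, (1/4 : ℝ) ^ (m + 1) * v m l)) :
    seqOsc (v n) ≤ 1/3 := by
  set w : ℕ → ℝ := fun m => (1/4) ^ (m + 1)
  have hw0 : ∀ m, 0 ≤ w m := fun m => by positivity
  have hwn : 0 < w n := by positivity
  set T : ℕ → ℝ := fun l => ∑' m, w (m + (n + 1)) * v (m + (n + 1)) l
  have hsplit : ∀ l, ∑' m, w m * v m l = ∑ m ∈ Finset.range n, w m * v m l + w n * v n l + T l :=
    fun l => by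
      rw [← (summable_mul_of_mem_Icc hw0 summable_quarter_pow_succ (hv · l)).sum_add_tsum_nat_add
        (n + 1), Finset.sum_range_succ]
  have hT : ∀ p q, |T p - T q| ≤ w n / 3 := by
    have hwT := (summable_nat_add_iff (n + 1)).2 summable_quarter_pow_succ
    have htail : ∑' m, w (m + (n + 1)) = w n / 3 := tsum_quarter_pow_tail (n + 1)
    intro p q
    have hp := tsum_mul_mem_Icc (fun m => hw0 _) hwT fun m => hv (m + (n + 1)) p
    have hq := tsum_mul_mem_Icc (fun m => hw0 _) hwT fun m => hv (m + (n + 1)) q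
    rw [htail] at hp hq
    exact abs_sub_le_of_nonneg_of_le hp.1 hp.2 hq.1 hq.2
  have hhead : Tendsto (fun l => ∑ m ∈ Finset.range n, w m * v m l) atTop
      (𝓝 (∑ m ∈ Finset.range n, w m * limUnder atTop (v m))) :=
    tendsto_finsetSum _ fun m hm =>
      (hprev m (Finset.mem_range.1 hm)).tendsto_limUnder.const_mul (w m)
  have hdecomp : v n = (fun l => (∑' m, w m * v m l - ∑ m ∈ Finset.range n, w m * v m l) / w n)
      + fun l => -T l / w n := by
    funext l
    simp only [Pi.add_apply, hsplit l]
    field_simp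
    ring
  rw [hdecomp]
  refine seqOsc_le_of_tendsto_add ((hG.tendsto_limUnder.sub hhead).div_const _) fun p q => ?_
  rw [← sub_div, abs_div, abs_of_pos hwn, div_le_iff₀ hwn, neg_sub_neg, abs_sub_comm]
  linarith [hT p q]

theorem cauchySeq_tsum_quarter_pow_mul_iff {v : ℕ → ℕ → ℝ} (hv : ∀ n l, v n l ∈ Icc 0 1)
    (hgap : ∀ n, ¬CauchySeq (v n) → 1/2 ≤ seqOsc (v n)) :
    CauchySeq (fun l => ∑' n, (1/4 : ℝ) ^ (n + 1) * v n l) ↔ ∀ n, CauchySeq (v n) := by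
  classical
  refine ⟨fun hG => ?_, cauchySeq_tsum_mul_of_forall_cauchySeq summable_quarter_pow_succ hv⟩
  by_contra! hbad
  have hn := Nat.find_spec hbad
  have := seqOsc_le_third_of_cauchySeq_tsum hv
    (fun m hm => not_not.1 (Nat.find_min hbad hm)) hG
  linarith [hgap _ hn]

/-- if `(f_n)` is a sequence of martingales with
`osc(f_n,β) ∈ {0} ∪ [1/2,1]` for all `n` and `β`, then some martingale `f`
satisfies `D(f) = ⋃_n D(f_n)`. -/
theorem union_of_divergence_sets
    (f : ℕ → List Bool → ℝ) (hf : ∀ n, IsMartingale (f n))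
    (hosc : ∀ n : ℕ, ∀ β : ℕ → Bool,
      osc (f n) β ∈ ({0} : Set ℝ) ∪ Set.Icc (1/2 : ℝ) 1) :
    ∃ g : List Bool → ℝ, IsMartingale g ∧ divSet g = ⋃ n, divSet (f n) := by
  have hg : IsMartingale (fun s => ∑' n, (1/4 : ℝ) ^ (n + 1) * f n s) :=
    isMartingale_tsum_mul hf (fun n => by positivity) summable_quarter_pow_succ
      (by simpa using (tsum_quarter_pow_tail 0).le.trans (by norm_num : (1/3 : ℝ) ≤ 1))
  refine ⟨_, hg, ext fun β => ?_⟩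
  have hgap : ∀ n, ¬CauchySeq (fun l => f n (seg β l)) →
      1/2 ≤ seqOsc (fun l => f n (seg β l)) := fun n hn => by
    rcases hosc n β with h | h
    · exact absurd ((mem_divSet_iff (hf n).1).2 hn) (by simp [divSet, mem_singleton_iff.1 h])
    · exact h.1
  simp only [mem_iUnion, mem_divSet_iff hg.1, mem_divSet_iff (hf _).1,
    cauchySeq_tsum_quarter_pow_mul_iff (fun n l => (hf n).1 _) hgap, not_forall]
end

section
/- The set 𝓟 := {f ∈ 𝓜 : osc(f,β) = 0 for every β ∈ 2^ω} of everywhere converging martingales is Π¹₁-complete: 𝓟 is a coanalytic subset of the compact space 𝓜 ⊆ [0,1]^{2^{<ω}}, and for every coanalytic subset A of 2^ω there is a continuous map g : 2^ω → 𝓜 with A = g⁻¹(𝓟). -/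
open MeasureTheory Filter Topology
open scoped ENNReal

/-- The compact space `𝓜` of martingales, as a subspace of `[0,1]^{2^{<ω}}`. -/
abbrev Mart := {f : List Bool → ℝ // IsMartingale f}

/-- The set `𝓟` of everywhere converging martingales. -/
def Pconv : Set Mart := {f | ∀ β : ℕ → Bool, osc f.1 β = 0}


/-!
The complement of `𝓟` is the projection of the Borel set `{(f, β) | osc(f, β) ≠ 0}`, hence
analytic.

For completeness, write the analytic set `Aᶜ` as `{β | T β has an infinite branch}`, where
`T β` is the tree of finite attempts at solving `F x = β` for a continuous `F : ω^ω → 2^ω` with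
range `Aᶜ`. The martingale `g β` explores `T β`: from a node `u`, the word `0^a 1 0` moves to the
child `u⌢a` if it lies in `T β`, and the value at a node is `1/3` or `2/3` according to the
parity of its depth; every other move freezes the value at the number that keeps the martingale
property. Along any `γ` the value therefore either freezes or stabilises with the depth of the
visited node, unless `γ` follows an infinite branch, where it oscillates by `1/3`. As
`g β (s)` only looks at nodes of length at most `|s|`, it depends only on `β↾|s|`, so `g` is
continuous.
-/

open Descriptive

section InitialSegments

variable {α : Type*}

/-- `seg β n` is `initSeg β n` by definition. -/
def initSeg (x : ℕ → α) (n : ℕ) : List α := List.ofFn fun i : Fin n => x i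

@[simp] lemma length_initSeg (x : ℕ → α) (n : ℕ) : (initSeg x n).length = n := by
  simp [initSeg]

lemma initSeg_succ (x : ℕ → α) (n : ℕ) : initSeg x (n + 1) = initSeg x n ++ [x n] := by
  rw [initSeg, List.ofFn_succ', List.concat_eq_append]
  rfl

lemma initSeg_eq_initSeg_iff {x y : ℕ → α} {n : ℕ} :
    initSeg x n = initSeg y n ↔ ∀ i < n, x i = y i := by
  simp [initSeg, List.ofFn_inj, funext_iff, Fin.forall_iff]

lemma initSeg_prefix_initSeg (x : ℕ → α) {m n : ℕ} (h : m ≤ n) : initSeg x m <+: initSeg x n := by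
  induction n, h using Nat.le_induction with
  | base => exact List.prefix_refl _
  | succ n _ ih => exact ih.trans (initSeg_succ x n ▸ List.prefix_append _ _)

theorem exists_initSeg_eq_of_prefix_chain {u : ℕ → List α}
    (hmono : ∀ m n, m ≤ n → u m <+: u n) (hunb : ∀ k, ∃ n, k ≤ (u n).length) :
    ∃ x : ℕ → α, ∀ n, initSeg x (u n).length = u n := by
  choose N hN using fun k => hunb (k + 1)
  have agree : ∀ m n i (hm : i < (u m).length) (hn : i < (u n).length), (u m)[i] = (u n)[i] := by
    intro m n i hm hn
    rcases le_total m n with h | h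
    · exact (hmono m n h).getElem hm
    · exact ((hmono n m h).getElem hn).symm
  refine ⟨fun i => (u (N i))[i]'(hN i), fun n => List.ext_getElem (by simp) fun i h₁ h₂ => ?_⟩
  simp only [initSeg, List.getElem_ofFn]
  exact agree _ _ _ _ _

end InitialSegments

lemma Nat.exists_eq_of_monotone_of_bddAbove {u : ℕ → ℕ} (hu : Monotone u)
    (hb : BddAbove (Set.range u)) : ∃ N, ∀ n ≥ N, u n = u N := by
  obtain ⟨N, hN⟩ := Nat.sSup_mem (Set.range_nonempty u) hb
  exact ⟨N, fun n hn => le_antisymm (hN ▸ le_csSup hb ⟨n, rfl⟩) (hu hn)⟩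

lemma continuous_seg (n : ℕ) : Continuous fun β : ℕ → Bool => seg β n :=
  (continuous_of_discreteTopology (f := fun v : Fin n → Bool => List.ofFn v)).comp
    (continuous_pi fun i => continuous_apply (i : ℕ))

lemma continuous_of_seg_eq {X : Type*} [TopologicalSpace X] {g : (ℕ → Bool) → X} (n : ℕ)
    (hg : ∀ β β', seg β n = seg β' n → g β = g β') : Continuous g := by
  refine ((IsLocallyConstant.iff_eventually_eq g).2 fun β => ?_).continuous
  filter_upwards [(continuous_seg n).continuousAt.eventually
    ((isOpen_discrete {seg β n}).mem_nhds rfl)] with β' hβ'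
  exact hg β' β hβ'

section Oscillation

variable {f : List Bool → ℝ} {β : ℕ → Bool}

lemma osc_eq_zero_of_eventually_const {N : ℕ}
    (h : ∀ m ≥ N, f (seg β m) = f (seg β N)) : osc f β = 0 := by
  have tail_nonneg : ∀ M, 0 ≤ ⨆ p : {n : ℕ // M ≤ n}, ⨆ q : {n : ℕ // M ≤ n},
      |f (seg β p.1) - f (seg β q.1)| :=
    fun M => Real.iSup_nonneg fun p => Real.iSup_nonneg fun q => abs_nonneg _
  refine le_antisymm ((ciInf_le ⟨0, ?_⟩ N).trans_eq ?_) (Real.iInf_nonneg tail_nonneg)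
  · rintro _ ⟨M, rfl⟩
    exact tail_nonneg M
  · simp [h _ (Subtype.prop _)]

lemma le_osc_of_frequently {C c : ℝ} (hC : ∀ s, |f s| ≤ C)
    (h : ∀ N, ∃ p ≥ N, ∃ q ≥ N, c ≤ |f (seg β p) - f (seg β q)|) : c ≤ osc f β := by
  have hbound : ∀ s t, |f s - f t| ≤ C + C := fun s t =>
    (abs_sub _ _).trans (add_le_add (hC s) (hC t))
  refine le_ciInf fun N => ?_
  obtain ⟨p, hp, q, hq, hc⟩ := h N
  have inner_bdd : ∀ p : {n : ℕ // N ≤ n}, BddAbove (Set.range fun q : {n : ℕ // N ≤ n} =>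
      |f (seg β p.1) - f (seg β q.1)|) := fun p => ⟨C + C, by rintro _ ⟨q, rfl⟩; exact hbound _ _⟩
  have outer_bdd : BddAbove (Set.range fun p : {n : ℕ // N ≤ n} =>
      ⨆ q : {n : ℕ // N ≤ n}, |f (seg β p.1) - f (seg β q.1)|) :=
    ⟨C + C, by rintro _ ⟨p, rfl⟩; exact ciSup_le fun q => hbound _ _⟩
  exact hc.trans ((le_ciSup (inner_bdd ⟨p, hp⟩) ⟨q, hq⟩).trans (le_ciSup outer_bdd ⟨p, hp⟩))

end Oscillation

section Trees

def HasBranch {α : Type*} (T : tree α) : Prop := ∃ x : ℕ → α, ∀ n, initSeg x n ∈ T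

lemma tendsto_of_forall_lt_eq {X : Type*} [TopologicalSpace X] {y : ℕ → ℕ → X} {x : ℕ → X}
    (h : ∀ k, ∀ i < k, y k i = x i) : Tendsto y atTop (𝓝 x) :=
  tendsto_pi_nhds.2 fun i => tendsto_const_nhds.congr'
    (eventually_atTop.2 ⟨i + 1, fun k hk => (h k i hk).symm⟩)

variable (F : (ℕ → ℕ) → ℕ → Bool) (β : ℕ → Bool)

def preimageTree : tree ℕ :=
  ⟨{u | ∃ x : ℕ → ℕ, ∀ i (hi : i < u.length), x i = u[i] ∧ F x i = β i},
    fun u a ⟨x, hx⟩ => ⟨x, fun i hi => by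
      have := hx i (by simp; omega)
      rwa [List.getElem_append_left hi] at this⟩⟩

@[simp] lemma mem_preimageTree {u : List ℕ} :
    u ∈ preimageTree F β ↔ ∃ x : ℕ → ℕ, ∀ i (hi : i < u.length), x i = u[i] ∧ F x i = β i :=
  Iff.rfl

lemma mem_preimageTree_congr {β β' : ℕ → Bool} {u : List ℕ}
    (h : ∀ i < u.length, β i = β' i) : u ∈ preimageTree F β ↔ u ∈ preimageTree F β' := by
  simp only [mem_preimageTree]
  refine exists_congr fun x => forall₂_congr fun i hi => ?_
  rw [h i hi]

lemma initSeg_mem_preimageTree_iff {x : ℕ → ℕ} {k : ℕ} :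
    initSeg x k ∈ preimageTree F β ↔ ∃ y : ℕ → ℕ, ∀ i < k, y i = x i ∧ F y i = β i := by
  simp [initSeg]

theorem hasBranch_preimageTree_iff (hF : Continuous F) :
    HasBranch (preimageTree F β) ↔ β ∈ Set.range F := by
  constructor
  · rintro ⟨x, hx⟩
    choose y hy using fun k => (initSeg_mem_preimageTree_iff F β).1 (hx k)
    have hy_lim : Tendsto y atTop (𝓝 x) := tendsto_of_forall_lt_eq fun k i hi => (hy k i hi).1
    have hFy_lim : Tendsto (F ∘ y) atTop (𝓝 β) :=
      tendsto_of_forall_lt_eq fun k i hi => (hy k i hi).2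
    exact ⟨x, tendsto_nhds_unique ((hF.tendsto x).comp hy_lim) hFy_lim⟩
  · rintro ⟨x, rfl⟩
    exact ⟨x, fun k => (initSeg_mem_preimageTree_iff F _).2 ⟨x, fun i _ => ⟨rfl, rfl⟩⟩⟩

end Trees

section TreeMartingale

noncomputable def level (k : ℕ) : ℝ := if Even k then 1 / 3 else 2 / 3

lemma level_mem (k : ℕ) : level k ∈ Set.Icc (0 : ℝ) 1 := by
  unfold level; split_ifs <;> norm_num

lemma two_mul_level_sub_level_succ_mem (k : ℕ) :
    2 * level k - level (k + 1) ∈ Set.Icc (0 : ℝ) 1 := by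
  rcases Nat.even_or_odd k with h | h
  · simp [level, h, Nat.even_add_one]
    norm_num
  · simp [level, Nat.not_even_iff_odd.2 h, Nat.even_add_one]
    norm_num

lemma abs_level_sub_level_succ (k : ℕ) : |level k - level (k + 1)| = 1 / 3 := by
  rcases Nat.even_or_odd k with h | h
  · simp [level, h, Nat.even_add_one]
    norm_num [abs_of_neg]
  · simp [level, Nat.not_even_iff_odd.2 h, Nat.even_add_one]
    norm_num

/-- `scan u a`: at node `u`, with `u⌢a` as candidate child; `gate u a`: the child `u⌢a` has been
chosen and the next bit either enters it or halts. -/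
inductive WalkState
  | scan (u : List ℕ) (a : ℕ)
  | gate (u : List ℕ) (a : ℕ)
  | halt (c : Set.Icc (0 : ℝ) 1)

namespace WalkState

noncomputable def value : WalkState → ℝ
  | scan u _ => level u.length
  | gate u _ => level u.length
  | halt c => c

def node : WalkState → List ℕ
  | scan u _ => u
  | gate u _ => u
  | halt _ => []

def depth (st : WalkState) : ℕ := st.node.length

open Classical in
noncomputable def step (T : tree ℕ) : WalkState → Bool → WalkState
  | scan u a, false => scan u (a + 1)
  | scan u a, true => gate u a
  | gate u a, false =>
      if u ++ [a] ∈ T then scan (u ++ [a]) 0 else halt ⟨_, level_mem (u.length + 1)⟩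
  | gate u _, true => halt ⟨_, two_mul_level_sub_level_succ_mem u.length⟩
  | halt c, _ => halt c

variable {T T' : tree ℕ}

lemma value_mem (st : WalkState) : st.value ∈ Set.Icc (0 : ℝ) 1 := by
  cases st with
  | scan u a => exact level_mem _
  | gate u a => exact level_mem _
  | halt c => exact c.2

lemma value_eq_avg_step (st : WalkState) :
    st.value = ((st.step T false).value + (st.step T true).value) / 2 := by
  cases st with
  | scan u a => simp [step, value]
  | gate u a =>
      by_cases h : u ++ [a] ∈ T <;> simp [step, value, h]
  | halt c => simp [step, value]

lemma value_eq_level (st : WalkState) (h : ∀ c, st ≠ halt c) : st.value = level st.depth := by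
  cases st with
  | scan u a => rfl
  | gate u a => rfl
  | halt c => exact absurd rfl (h c)

lemma step_halt (c : Set.Icc (0 : ℝ) 1) (b : Bool) : (halt c).step T b = halt c := by
  cases b <;> rfl

lemma node_step (st : WalkState) (b : Bool) (h : ∀ c, st.step T b ≠ halt c) :
    st.node <+: (st.step T b).node ∧ ((st.step T b).node = st.node ∨ (st.step T b).node ∈ T) := by
  cases st with
  | scan u a => cases b <;> exact ⟨List.prefix_refl _, Or.inl rfl⟩
  | gate u a =>
      cases b with
      | false =>
          by_cases hu : u ++ [a] ∈ T
          · rw [step, if_pos hu]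
            exact ⟨List.prefix_append _ _, Or.inr hu⟩
          · simp [step, hu] at h
      | true => simp [step] at h
  | halt c => exact absurd (step_halt c b) (h c)

lemma depth_step_le (st : WalkState) (b : Bool) : (st.step T b).depth ≤ st.depth + 1 := by
  cases st with
  | scan u a => cases b <;> simp [step, depth, node]
  | gate u a =>
      cases b with
      | false => by_cases hu : u ++ [a] ∈ T <;> simp [step, depth, node, hu]
      | true => simp [step, depth, node]
  | halt c => cases b <;> simp [step, depth, node]

lemma step_congr (st : WalkState) (b : Bool)
    (h : ∀ u : List ℕ, u.length ≤ st.depth + 1 → (u ∈ T ↔ u ∈ T')) :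
    st.step T b = st.step T' b := by
  cases st with
  | scan u a => cases b <;> rfl
  | gate u a =>
      cases b with
      | false =>
          simp only [step]
          congr 1
          exact propext (h (u ++ [a]) (by simp [depth, node]))
      | true => rfl
  | halt c => cases b <;> rfl

end WalkState

open WalkState

noncomputable def walk (T : tree ℕ) (s : List Bool) : WalkState := s.foldl (step T) (scan [] 0)

noncomputable def treeMart (T : tree ℕ) (s : List Bool) : ℝ := (walk T s).value

variable {T T' : tree ℕ}

lemma walk_append_singleton (s : List Bool) (b : Bool) :
    walk T (s ++ [b]) = (walk T s).step T b := by
  simp [walk]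

lemma isMartingale_treeMart (T : tree ℕ) : IsMartingale (treeMart T) :=
  ⟨fun s => value_mem _, fun s => by
    simp only [treeMart, walk_append_singleton]
    exact value_eq_avg_step _⟩

lemma depth_walk_le (s : List Bool) : (walk T s).depth ≤ s.length := by
  induction s using List.reverseRecOn with
  | nil => simp [walk, depth, node]
  | append_singleton s b ih =>
      rw [walk_append_singleton]
      simpa using (depth_step_le _ b).trans (Nat.succ_le_succ ih)

lemma walk_congr {s : List Bool} (h : ∀ u : List ℕ, u.length ≤ s.length → (u ∈ T ↔ u ∈ T')) :
    walk T s = walk T' s := by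
  induction s using List.reverseRecOn with
  | nil => rfl
  | append_singleton s b ih =>
      simp only [List.length_append, List.length_singleton] at h
      rw [walk_append_singleton, walk_append_singleton, ih fun u hu => h u (by omega)]
      exact step_congr _ _ fun u hu => h u (hu.trans (by simpa using depth_walk_le (T := T') s))

lemma treeMart_congr {s : List Bool}
    (h : ∀ u : List ℕ, u.length ≤ s.length → (u ∈ T ↔ u ∈ T')) : treeMart T s = treeMart T' s :=
  congrArg value (walk_congr h)

theorem continuous_treeMart {T : (ℕ → Bool) → tree ℕ}
    (hT : ∀ β β' u, (∀ i < u.length, β i = β' i) → (u ∈ T β ↔ u ∈ T β')) (s : List Bool) :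
    Continuous fun β => treeMart (T β) s :=
  continuous_of_seg_eq s.length fun β β' h => treeMart_congr fun u hu =>
    hT β β' u fun i hi => initSeg_eq_initSeg_iff.1 h i (by omega)

section Convergence

variable {γ : ℕ → Bool}

lemma walk_seg_succ (n : ℕ) : walk T (seg γ (n + 1)) = (walk T (seg γ n)).step T (γ n) :=
  (congrArg (walk T) (initSeg_succ γ n)).trans (walk_append_singleton _ _)

lemma walk_seg_eq_halt {n : ℕ} {c : Set.Icc (0 : ℝ) 1} (h : walk T (seg γ n) = halt c) :
    ∀ m ≥ n, walk T (seg γ m) = halt c := by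
  intro m hm
  induction m, hm using Nat.le_induction with
  | base => exact h
  | succ m _ ih => rw [walk_seg_succ, ih, step_halt]

variable (hγ : ∀ n c, walk T (seg γ n) ≠ halt c)
include hγ

lemma node_walk_seg_prefix {m n : ℕ} (hmn : m ≤ n) :
    (walk T (seg γ m)).node <+: (walk T (seg γ n)).node := by
  induction n, hmn using Nat.le_induction with
  | base => exact List.prefix_refl _
  | succ n _ ih =>
      rw [walk_seg_succ]
      exact ih.trans (node_step _ _ fun c => walk_seg_succ (T := T) n ▸ hγ (n + 1) c).1

lemma node_walk_seg_eq_nil_or_mem (n : ℕ) :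
    (walk T (seg γ n)).node = [] ∨ (walk T (seg γ n)).node ∈ T := by
  induction n with
  | zero => exact Or.inl rfl
  | succ n ih =>
      rw [walk_seg_succ]
      rcases (node_step _ _ fun c => walk_seg_succ (T := T) n ▸ hγ (n + 1) c).2 with h | h
      · exact h ▸ ih
      · exact Or.inr h

/-- Unbounded depth along `γ` would trace an infinite branch of `T`. -/
lemma bddAbove_depth_walk_seg (hT : ¬HasBranch T) :
    BddAbove (Set.range fun n => (walk T (seg γ n)).depth) := by
  by_contra hunb
  have deep : ∀ k, ∃ n, k < (walk T (seg γ n)).depth := by simpa [not_bddAbove_iff] using hunb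
  obtain ⟨x, hx⟩ := exists_initSeg_eq_of_prefix_chain (fun m n => node_walk_seg_prefix hγ)
    fun k => (deep k).imp fun n hn => hn.le
  refine hT ⟨x, fun k => ?_⟩
  obtain ⟨n, hn⟩ := deep k
  have hmem : (walk T (seg γ n)).node ∈ T :=
    (node_walk_seg_eq_nil_or_mem hγ n).resolve_left fun h => by simp [depth, h] at hn
  exact Tree.mem_of_prefix (hx n ▸ initSeg_prefix_initSeg x hn.le) hmem

end Convergence

theorem osc_treeMart_eq_zero (hT : ¬HasBranch T) (γ : ℕ → Bool) : osc (treeMart T) γ = 0 := by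
  by_cases halted : ∃ n c, walk T (seg γ n) = halt c
  · obtain ⟨n, c, hn⟩ := halted
    refine osc_eq_zero_of_eventually_const (N := n) fun m hm => ?_
    simp only [treeMart, walk_seg_eq_halt hn m hm, hn]
  · push Not at halted
    obtain ⟨N, hN⟩ := Nat.exists_eq_of_monotone_of_bddAbove
      (fun m n hmn => (node_walk_seg_prefix halted hmn).length_le)
      (bddAbove_depth_walk_seg halted hT)
    refine osc_eq_zero_of_eventually_const (N := N) fun m hm => ?_
    simp only [treeMart, value_eq_level _ (halted m), value_eq_level _ (halted N)]
    exact congrArg level (hN m hm)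

section Divergence

def branchPath (x : ℕ → ℕ) : ℕ → List Bool
  | 0 => []
  | k + 1 => branchPath x k ++ (List.replicate (x k) false ++ [true, false])

lemma branchPath_prefix (x : ℕ → ℕ) {m n : ℕ} (h : m ≤ n) : branchPath x m <+: branchPath x n := by
  induction n, h using Nat.le_induction with
  | base => exact List.prefix_refl _
  | succ n _ ih => exact ih.trans (List.prefix_append _ _)

lemma le_length_branchPath (x : ℕ → ℕ) (k : ℕ) : k ≤ (branchPath x k).length := by
  induction k with
  | zero => exact le_rfl
  | succ k ih => simp [branchPath]; omega

lemma foldl_step_replicate_false (u : List ℕ) (a j : ℕ) :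
    (List.replicate j false).foldl (step T) (scan u a) = scan u (a + j) := by
  induction j generalizing a with
  | zero => rfl
  | succ j ih =>
      rw [List.replicate_succ, List.foldl_cons, step, ih, Nat.add_right_comm, Nat.add_assoc]

lemma walk_branchPath {x : ℕ → ℕ} (hx : ∀ k, initSeg x k ∈ T) (k : ℕ) :
    walk T (branchPath x k) = scan (initSeg x k) 0 := by
  induction k with
  | zero => rfl
  | succ k ih =>
      rw [walk, branchPath, List.foldl_append, ← walk, ih, List.foldl_append,
        foldl_step_replicate_false, zero_add, initSeg_succ]
      simp [step, ← initSeg_succ, hx (k + 1)]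

theorem exists_one_third_le_osc_treeMart (hT : HasBranch T) : ∃ γ, 1 / 3 ≤ osc (treeMart T) γ := by
  obtain ⟨x, hx⟩ := hT
  obtain ⟨γ, hγ⟩ := exists_initSeg_eq_of_prefix_chain (fun m n => branchPath_prefix x)
    fun k => ⟨k, le_length_branchPath x k⟩
  have hval : ∀ k, treeMart T (seg γ (branchPath x k).length) = level k := by
    intro k
    rw [show seg γ _ = branchPath x k from hγ k, treeMart, walk_branchPath hx]
    simp [value]
  refine ⟨γ, le_osc_of_frequently (C := 1) (fun s => abs_le.2 ?_) fun N => ?_⟩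
  · have := isMartingale_treeMart T |>.1 s
    exact ⟨by linarith [this.1], this.2⟩
  · refine ⟨_, le_length_branchPath x N, _,
      (Nat.le_succ N).trans (le_length_branchPath x (N + 1)), ?_⟩
    rw [hval, hval, abs_level_sub_level_succ]

end Divergence

end TreeMartingale

noncomputable def treeMartingale (T : tree ℕ) : Mart := ⟨treeMart T, isMartingale_treeMart T⟩

theorem treeMartingale_mem_Pconv_iff {T : tree ℕ} : treeMartingale T ∈ Pconv ↔ ¬HasBranch T := by
  refine ⟨fun h hT => ?_, fun hT γ => osc_treeMart_eq_zero hT γ⟩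
  obtain ⟨γ, hγ⟩ := exists_one_third_le_osc_treeMart hT
  have : osc (treeMart T) γ = 0 := h γ
  linarith

theorem exists_tree_family_of_analyticSet {S : Set (ℕ → Bool)} (hS : AnalyticSet S) :
    ∃ T : (ℕ → Bool) → tree ℕ,
      (∀ β β' u, (∀ i < u.length, β i = β' i) → (u ∈ T β ↔ u ∈ T β')) ∧
      ∀ β, β ∈ S ↔ HasBranch (T β) := by
  rw [AnalyticSet_def] at hS
  rcases hS with rfl | ⟨F, hF, rfl⟩
  · refine ⟨fun _ => ⊥, fun _ _ _ _ => Iff.rfl, fun β => ?_⟩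
    simp [HasBranch]
  · exact ⟨preimageTree F, fun β β' u => mem_preimageTree_congr F,
      fun β => (hasBranch_preimageTree_iff F β hF).symm⟩

lemma isClosed_setOf_isMartingale : IsClosed {f : List Bool → ℝ | IsMartingale f} := by
  simp only [IsMartingale, Set.ofPred_and, Set.ofPred_forall]
  exact (isClosed_iInter fun s => isClosed_Icc.preimage (continuous_apply s)).inter
    (isClosed_iInter fun s => isClosed_eq (continuous_apply s) (by fun_prop))

instance : PolishSpace Mart := isClosed_setOf_isMartingale.polishSpace

lemma measurable_osc : Measurable fun x : Mart × (ℕ → Bool) => osc x.1.1 x.2 := by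
  have apply_list : Continuous fun y : Mart × List Bool => y.1.1 y.2 :=
    continuous_prod_of_discrete_right.2 fun s => (continuous_apply s).comp continuous_subtype_val
  have eval : ∀ p, Continuous fun x : Mart × (ℕ → Bool) => x.1.1 (seg x.2 p) := fun p =>
    apply_list.comp (continuous_fst.prodMk ((continuous_seg p).comp continuous_snd))
  exact .iInf fun N => .iSup fun p => .iSup fun q =>
    (((eval p.1).sub (eval q.1)).abs).measurable

theorem isCoanalytic_Pconv : IsCoanalytic Pconv := by
  have hcompl : Pconvᶜ = Prod.fst '' {x : Mart × (ℕ → Bool) | osc x.1.1 x.2 ≠ 0} := by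
    ext f
    simp [Pconv]
  rw [IsCoanalytic, hcompl]
  have : PolishSpace Bool := inferInstance
  exact ((measurableSet_singleton 0).compl.preimage measurable_osc).analyticSet.image_of_continuous
    continuous_fst

/-- `𝓟` is `Π¹₁`-complete: it is coanalytic, and every coanalytic
subset of `2^ω` is the preimage of `𝓟` under some continuous `g : 2^ω → 𝓜`. -/
theorem Pconv_coanalytic_complete :
    IsCoanalytic Pconv ∧
    ∀ A : Set (ℕ → Bool), IsCoanalytic A →
      ∃ g : (ℕ → Bool) → Mart, Continuous g ∧ A = g ⁻¹' Pconv := by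
  refine ⟨isCoanalytic_Pconv, fun A hA => ?_⟩
  obtain ⟨T, hloc, hT⟩ := exists_tree_family_of_analyticSet hA
  refine ⟨fun β => treeMartingale (T β),
    (continuous_pi fun s => continuous_treeMart hloc s).subtype_mk _, ?_⟩
  ext β
  rw [Set.mem_preimage, treeMartingale_mem_Pconv_iff, ← hT, Set.mem_compl_iff, not_not]
end
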